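/- Let M be a 2n×2n real symplectic matrix with I·M·I = M⁻¹ where I = [[Id, 0],[0, -Id]], written in blocks M = [[A, B], [C, Aᵀ]] (so that the block relations D = Aᵀ, B = Bᵀ, C = Cᵀ from reversibility hold). Then for every k ≥ 1, M^k = [[T_k(A), U_{k-1}(A)·B], [C·U_{k-1}(A), T_k(Aᵀ)]], where T_k and U_{k-1} are the Chebyshev polynomials of the first and second kind, defined by T_0 = 1, T_1(x) = x, T_{k+1}(x) = 2x·T_k(x) - T_{k-1}(x) and U_0(x) = 1, U_1(x) = 2x, U_k(x) = 2x·U_{k-1}(x) - U_{k-2}(x) (so that T_k(cos θ) = cos(kθ)), evaluated at the matrix A. -/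
import Mathlib

open Matrix Polynomial

private lemma semiconj_aeval {A : Type*} [Ring A] [Algebra ℝ A] {c x y : A}
    (h : c * x = y * c) (p : ℝ[X]) :
    c * Polynomial.aeval x p = Polynomial.aeval y p * c := by
  induction p using Polynomial.induction_on' with
  | add p q hp hq => simp [mul_add, add_mul, hp, hq]
  | monomial m a =>
      have hm : c * x ^ m = y ^ m * c := (SemiconjBy.pow_right h m)
      simp only [Polynomial.aeval_monomial]
      rw [← mul_assoc, ← Algebra.commutes, mul_assoc, hm, ← mul_assoc]

/-- Iteration formula for a symplectic matrix `M = [[A,B],[C,Aᵀ]]` which is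
reversible with respect to `I = [[1,0],[0,-1]]` (so that `B` and `C` are
symmetric): `M^k = [[T_k(A), U_{k-1}(A)·B], [C·U_{k-1}(A), T_k(Aᵀ)]]`,
where `T` and `U` are the Chebyshev polynomials of the first and second kind. -/
theorem chebyshev_iteration_formula
    (n : ℕ) (A B C : Matrix (Fin n) (Fin n) ℝ)
    (hB : Bᵀ = B) (hC : Cᵀ = C)
    (hM : (Matrix.fromBlocks A B C Aᵀ)ᵀ *
        Matrix.fromBlocks (0 : Matrix (Fin n) (Fin n) ℝ) (-1) 1 0 *
        Matrix.fromBlocks A B C Aᵀ =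
      Matrix.fromBlocks (0 : Matrix (Fin n) (Fin n) ℝ) (-1) 1 0)
    (hrev : Matrix.fromBlocks (1 : Matrix (Fin n) (Fin n) ℝ) 0 0 (-1) *
        Matrix.fromBlocks A B C Aᵀ *
        Matrix.fromBlocks (1 : Matrix (Fin n) (Fin n) ℝ) 0 0 (-1) =
      (Matrix.fromBlocks A B C Aᵀ)⁻¹) :
    ∀ k : ℕ, 1 ≤ k →
      (Matrix.fromBlocks A B C Aᵀ) ^ k =
        Matrix.fromBlocks
          (Polynomial.aeval A (Polynomial.Chebyshev.T ℝ (k : ℤ)))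
          (Polynomial.aeval A (Polynomial.Chebyshev.U ℝ ((k : ℤ) - 1)) * B)
          (C * Polynomial.aeval A (Polynomial.Chebyshev.U ℝ ((k : ℤ) - 1)))
          (Polynomial.aeval Aᵀ (Polynomial.Chebyshev.T ℝ (k : ℤ))) := by
  -- extract block relations from symplecticity
  simp only [Matrix.fromBlocks_transpose, Matrix.fromBlocks_multiply] at hM
  have h11 := congrArg Matrix.toBlocks₁₁ hM
  have h12 := congrArg Matrix.toBlocks₁₂ hM
  have h21 := congrArg Matrix.toBlocks₂₁ hM
  have h22 := congrArg Matrix.toBlocks₂₂ hM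
  simp only [Matrix.toBlocks_fromBlocks₁₁, Matrix.toBlocks_fromBlocks₁₂,
    Matrix.toBlocks_fromBlocks₂₁, Matrix.toBlocks_fromBlocks₂₂,
    Matrix.mul_zero, Matrix.zero_mul, Matrix.mul_one, Matrix.mul_neg,
    Matrix.neg_mul, Matrix.one_mul, zero_add, add_zero, Matrix.transpose_transpose, hB, hC] at h11 h12 h21 h22
  -- h11 : C * A + -(Aᵀ * C) = 0  (roughly)
  have hCA : C * A = Aᵀ * C := by linear_combination (norm := noncomm_ring) h11
  have hAB : B * Aᵀ = A * B := by linear_combination (norm := noncomm_ring) -h22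
  have hBC : B * C = A * A - 1 := by linear_combination (norm := noncomm_ring) -h21
  have hCB : C * B = Aᵀ * Aᵀ - 1 := by linear_combination (norm := noncomm_ring) h12
  have hCp : ∀ p : ℝ[X], C * Polynomial.aeval A p = Polynomial.aeval Aᵀ p * C :=
    fun p => semiconj_aeval hCA p
  intro k hk
  induction k with
  | zero => omega
  | succ k ih =>
    rcases Nat.eq_or_lt_of_le hk with h1 | h1
    · have : k = 0 := by omega
      subst this
      simp [Polynomial.Chebyshev.T_one, Polynomial.Chebyshev.U_zero]
    · have hk' : 1 ≤ k := by omega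
      have IH := ih hk'
      rw [pow_succ, IH, Matrix.fromBlocks_multiply]
      have hcast : ((k + 1 : ℕ) : ℤ) = (k : ℤ) + 1 := by push_cast; ring
      rw [hcast]
      have hpolT : Polynomial.Chebyshev.T ℝ ((k : ℤ) + 1) =
          Polynomial.Chebyshev.T ℝ (k : ℤ) * X +
            Polynomial.Chebyshev.U ℝ ((k : ℤ) - 1) * (X * X - 1) := by
        have := Polynomial.Chebyshev.T_eq_X_mul_T_sub_pol_U ℝ ((k : ℤ) - 1)
        rw [show (k : ℤ) - 1 + 2 = (k : ℤ) + 1 by ring,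
          show (k : ℤ) - 1 + 1 = (k : ℤ) by ring] at this
        rw [this]; ring
      have hpolU : Polynomial.Chebyshev.U ℝ ((k : ℤ) + 1 - 1) =
          Polynomial.Chebyshev.U ℝ ((k : ℤ) - 1) * X +
            Polynomial.Chebyshev.T ℝ (k : ℤ) := by
        have := Polynomial.Chebyshev.U_eq_X_mul_U_add_T ℝ ((k : ℤ) - 1)
        rw [show (k : ℤ) - 1 + 1 = (k : ℤ) by ring] at this
        rw [show (k : ℤ) + 1 - 1 = (k : ℤ) by ring, this]; ring
      rw [Matrix.fromBlocks_inj]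
      refine ⟨?_, ?_, ?_, ?_⟩
      · rw [hpolT]
        simp only [_root_.map_add, _root_.map_mul, _root_.map_sub, _root_.map_one,
          Polynomial.aeval_X]
        rw [mul_assoc _ B C, hBC]
      · rw [hpolU]
        simp only [_root_.map_add, _root_.map_mul, Polynomial.aeval_X, add_mul]
        rw [mul_assoc _ B Aᵀ, hAB, ← mul_assoc]
        abel
      · rw [hpolU]
        simp only [_root_.map_add, _root_.map_mul, Polynomial.aeval_X, mul_add]
        rw [hCp (Polynomial.Chebyshev.T ℝ (k : ℤ)), ← mul_assoc]
      · rw [hpolT]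
        simp only [_root_.map_add, _root_.map_mul, _root_.map_sub, _root_.map_one,
          Polynomial.aeval_X]
        rw [hCp (Polynomial.Chebyshev.U ℝ ((k : ℤ) - 1)), mul_assoc, hCB]
        abel
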